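/- Let g satisfy condition (g) and set f = e^g. For y ≥ −log F(0), let η(y) be the unique u ≥ 0 with F(u) = e^{−y}, and define h(y) = 1 − f'(η(y))·F(η(y)). Then h is twice differentiable, h'(y) < 0, and h''(y) ≥ 4·h'(y) for all y ≥ −log F(0); equivalently h''(y)/h'(y) ≤ 4. -/

import Mathlib

/-- One-sided derivative on `[0, ∞)`. -/
noncomputable def dIci (g : ℝ → ℝ) : ℝ → ℝ := derivWithin g (Set.Ici 0)

/-- Condition (g): `g ∈ C³([0,∞))` with `g' > 0`, `g'' > 0`, `g'² - g'' ≥ 0`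
and `2 g''² - g' g''' > 0` on `[0, ∞)`. -/
def ConditionG (g : ℝ → ℝ) : Prop :=
  ContDiffOn ℝ 3 g (Set.Ici 0) ∧
  ∀ u : ℝ, 0 ≤ u →
    0 < dIci g u ∧
    0 < dIci (dIci g) u ∧
    0 ≤ (dIci g u) ^ 2 - dIci (dIci g) u ∧
    0 < 2 * (dIci (dIci g) u) ^ 2 - dIci g u * dIci (dIci (dIci g)) u

/-- `F(u) = ∫_u^∞ ds / f(s)`. -/
noncomputable def Fint (f : ℝ → ℝ) (u : ℝ) : ℝ := ∫ s in Set.Ioi u, (f s)⁻¹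

/-!
Write `Z = f F`. Since `F' = -1/f`, one has `Z' = g' Z - 1`, and differentiating `F (η y) = e^{-y}`
gives `η' = Z ∘ η`. Hence `h' = K ∘ η` and `h'' = (K' Z) ∘ η` with `K = (g' - (g'² + g'') Z) Z`,
and everything reduces to two bounds: `g' Z < 1` and `g' < (g'² + g'') Z`. They say that
`e^{-g} / g' - F` and `F - e^{-g} g' / (g'² + g'')` are positive, which holds because both tend
to `0` at infinity and are strictly decreasing, by `g'' > 0` and by `2 g''² > g' g'''`
respectively. Finally, with `t = (g'² + g'') Z`, the two bounds and `g'' ≤ g'²` give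
`g' < t < 2 g'`, and `K' Z - 4 K = Z (7 t - 5 g' - s Z²)` with `s = g''' + 4 g' g'' + 2 g'³`;
since `g' s < 2 (g'² + g'')²`, we get `g' (7 t - 5 g' - s Z²) > (5 g' - 2 t) (t - g') > 0`.
-/

open Set Filter Topology MeasureTheory Real

section Monotonicity

variable {φ φ' : ℝ → ℝ} {a : ℝ}

theorem monotoneOn_Ici_of_hasDerivWithinAt_nonneg
    (hφ : ∀ x ∈ Ici a, HasDerivWithinAt φ (φ' x) (Ici a) x) (hφ' : ∀ x ∈ Ici a, 0 ≤ φ' x) :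
    MonotoneOn φ (Ici a) :=
  monotoneOn_of_hasDerivWithinAt_nonneg (convex_Ici a) (fun x hx => (hφ x hx).continuousWithinAt)
    (fun x hx => (hφ x (interior_subset hx)).mono interior_subset)
    (fun x hx => hφ' x (interior_subset hx))

theorem strictAntiOn_Ici_of_hasDerivWithinAt_neg
    (hφ : ∀ x ∈ Ici a, HasDerivWithinAt φ (φ' x) (Ici a) x) (hφ' : ∀ x ∈ Ici a, φ' x < 0) :
    StrictAntiOn φ (Ici a) :=
  strictAntiOn_of_hasDerivWithinAt_neg (convex_Ici a) (fun x hx => (hφ x hx).continuousWithinAt)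
    (fun x hx => (hφ x (interior_subset hx)).mono interior_subset)
    (fun x hx => hφ' x (interior_subset hx))

theorem pos_of_hasDerivWithinAt_neg_of_tendsto_zero
    (hφ : ∀ x ∈ Ici a, HasDerivWithinAt φ (φ' x) (Ici a) x) (hφ' : ∀ x ∈ Ici a, φ' x < 0)
    (hlim : Tendsto φ atTop (𝓝 0)) {x : ℝ} (hx : x ∈ Ici a) : 0 < φ x := by
  have hanti := strictAntiOn_Ici_of_hasDerivWithinAt_neg hφ hφ'
  have hx1 : x + 1 ∈ Ici a := mem_Ici.2 (by linarith [mem_Ici.1 hx])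
  have hnonneg : 0 ≤ φ (x + 1) := le_of_tendsto hlim <| by
    filter_upwards [eventually_ge_atTop (x + 1)] with z hz
    exact hanti.antitoneOn hx1 (mem_Ici.2 ((mem_Ici.1 hx1).trans hz)) hz
  exact hnonneg.trans_lt (hanti hx hx1 (lt_add_one x))

end Monotonicity

section LeftInverse

variable {Y η : ℝ → ℝ} {s t : Set ℝ}

theorem strictMonoOn_of_leftInvOn (hY : MonotoneOn Y s) (hmaps : MapsTo η t s)
    (hinv : LeftInvOn Y η t) : StrictMonoOn η t := by
  intro x hx z hz hxz
  by_contra! hle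
  have := hY (hmaps hz) (hmaps hx) hle
  rw [hinv hx, hinv hz] at this
  exact hxz.not_ge this

theorem StrictMonoOn.continuousWithinAt_Ici_of_surjOn {a y : ℝ} (hη : StrictMonoOn η (Ici a))
    (hsurj : SurjOn η (Ici a) (Ici (η a))) (hy : a ≤ y) : ContinuousWithinAt η (Ici a) y := by
  rcases hy.eq_or_lt with rfl | hay
  · exact hη.continuousWithinAt_right_of_image_mem_nhdsWithin self_mem_nhdsWithin
      (mem_of_superset self_mem_nhdsWithin hsurj)
  · exact (hη.continuousAt_of_image_mem_nhds (Ici_mem_nhds hay)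
      (mem_of_superset (Ici_mem_nhds (hη self_mem_Ici hy hay)) hsurj)).continuousWithinAt

theorem HasDerivWithinAt.of_leftInvOn {y Y' : ℝ} (hY : HasDerivWithinAt Y Y' s (η y))
    (hY' : Y' ≠ 0) (hη : ContinuousWithinAt η t y) (hmaps : MapsTo η t s)
    (hinv : LeftInvOn Y η t) (hy : y ∈ t) : HasDerivWithinAt η Y'⁻¹ t y := by
  have hη_ne : ∀ z ∈ t \ {y}, η z ∈ s \ {η y} := fun z hz =>
    ⟨hmaps hz.1, fun heq => hz.2 <| mem_singleton_iff.2 <| by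
      rw [← hinv hz.1, ← hinv hy, eq_of_mem_singleton heq]⟩
  have hlim : Tendsto η (𝓝[t \ {y}] y) (𝓝[s \ {η y}] (η y)) :=
    tendsto_nhdsWithin_iff.2 ⟨(hη.mono sdiff_subset).tendsto,
      eventually_nhdsWithin_of_forall hη_ne⟩
  rw [hasDerivWithinAt_iff_tendsto_slope] at hY ⊢
  refine ((hY.comp hlim).inv₀ hY').congr' (eventually_nhdsWithin_of_forall fun z hz => ?_)
  simp only [Function.comp, slope_def_field, inv_div, hinv hz.1, hinv hy]

end LeftInverse

section Fint

variable {f : ℝ → ℝ}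

theorem Fint_eq_sub_intervalIntegral (hint : IntegrableOn (fun s => (f s)⁻¹) (Ioi 0)) {u : ℝ}
    (hu : 0 ≤ u) : Fint f u = Fint f 0 - ∫ s in (0 : ℝ)..u, (f s)⁻¹ := by
  rw [Fint, Fint, ← intervalIntegral.integral_Ioi_sub_Ioi hint hu, sub_sub_cancel]

theorem hasDerivWithinAt_Fint (hf : ContinuousOn f (Ici 0)) (hpos : ∀ s ∈ Ici (0 : ℝ), 0 < f s)
    (hint : IntegrableOn (fun s => (f s)⁻¹) (Ioi 0)) {u : ℝ} (hu : 0 ≤ u) :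
    HasDerivWithinAt (Fint f) (-(f u)⁻¹) (Ici 0) u := by
  have hcont : ContinuousOn (fun s => (f s)⁻¹) (Icc 0 (u + 1)) :=
    (hf.inv₀ fun s hs => (hpos s hs).ne').mono Icc_subset_Ici_self
  have : Fact (u ∈ Icc 0 (u + 1)) := ⟨⟨hu, by linarith⟩⟩
  have hFTC : HasDerivWithinAt (fun x => ∫ s in (0 : ℝ)..x, (f s)⁻¹) (f u)⁻¹ (Icc 0 (u + 1)) u :=
    intervalIntegral.integral_hasDerivWithinAt_right
      (ContinuousOn.intervalIntegrable_of_Icc hu (hcont.mono (Icc_subset_Icc_right (by linarith))))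
      (hcont.stronglyMeasurableAtFilter_nhdsWithin measurableSet_Icc u)
      (hcont.continuousWithinAt (Fact.out))
  have hnhds : Icc 0 (u + 1) ∈ 𝓝[Ici 0] u := by
    rw [← Ici_inter_Iic]
    exact inter_mem_nhdsWithin _ (Iic_mem_nhds (by linarith))
  exact ((hFTC.const_sub (Fint f 0)).mono_of_mem_nhdsWithin hnhds).congr
    (fun x hx => Fint_eq_sub_intervalIntegral hint hx) (Fint_eq_sub_intervalIntegral hint hu)

theorem tendsto_Fint_atTop (hint : IntegrableOn (fun s => (f s)⁻¹) (Ioi 0)) :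
    Tendsto (Fint f) atTop (𝓝 0) := by
  have hlim := (intervalIntegral_tendsto_integral_Ioi 0 hint tendsto_id).const_sub (Fint f 0)
  rw [Fint, sub_self] at hlim
  refine hlim.congr' ?_
  filter_upwards [eventually_ge_atTop 0] with u hu
  exact (Fint_eq_sub_intervalIntegral hint hu).symm

theorem strictAntiOn_Fint (hf : ContinuousOn f (Ici 0)) (hpos : ∀ s ∈ Ici (0 : ℝ), 0 < f s)
    (hint : IntegrableOn (fun s => (f s)⁻¹) (Ioi 0)) : StrictAntiOn (Fint f) (Ici 0) :=
  strictAntiOn_Ici_of_hasDerivWithinAt_neg (fun _ hu => hasDerivWithinAt_Fint hf hpos hint hu)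
    fun u hu => neg_neg_of_pos (inv_pos.2 (hpos u hu))

theorem Fint_pos (hf : ContinuousOn f (Ici 0)) (hpos : ∀ s ∈ Ici (0 : ℝ), 0 < f s)
    (hint : IntegrableOn (fun s => (f s)⁻¹) (Ioi 0)) {u : ℝ} (hu : 0 ≤ u) : 0 < Fint f u :=
  pos_of_hasDerivWithinAt_neg_of_tendsto_zero (fun _ hx => hasDerivWithinAt_Fint hf hpos hint hx)
    (fun x hx => neg_neg_of_pos (inv_pos.2 (hpos x hx))) (tendsto_Fint_atTop hint) hu

end Fint

theorem four_mul_le_of_bounds {P Q R Z : ℝ} (hP : 0 < P) (hZ : 0 < Z) (hQ : Q ≤ P ^ 2)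
    (hR : P * R < 2 * Q ^ 2) (hPZ : P * Z < 1) (hcZ : P < (P ^ 2 + Q) * Z) :
    4 * ((P - (P ^ 2 + Q) * Z) * Z) ≤
      (-P + 3 * (P ^ 2 + Q) * Z - (R + 4 * P * Q + 2 * P ^ 3) * Z ^ 2) * Z := by
  set t := (P ^ 2 + Q) * Z
  have ht_lt : t < 2 * P := by nlinarith [mul_le_mul_of_nonneg_right hQ hZ.le]
  have hs : P * ((R + 4 * P * Q + 2 * P ^ 3) * Z ^ 2) ≤ 2 * t ^ 2 := by
    have : P * (R + 4 * P * Q + 2 * P ^ 3) ≤ 2 * (P ^ 2 + Q) ^ 2 := by nlinarith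
    nlinarith [mul_le_mul_of_nonneg_right this (sq_nonneg Z)]
  have hψ : 0 ≤ -5 * P + 7 * t - (R + 4 * P * Q + 2 * P ^ 3) * Z ^ 2 := by
    have : 0 < (5 * P - 2 * t) * (t - P) := mul_pos (by linarith) (by linarith)
    nlinarith
  nlinarith [mul_nonneg hZ.le hψ]

theorem hasDerivWithinAt_dIci_of_contDiffOn {φ : ℝ → ℝ} {n : WithTop ℕ∞}
    (hφ : ContDiffOn ℝ n φ (Ici 0)) (hn : n ≠ 0) {u : ℝ} (hu : 0 ≤ u) :
    HasDerivWithinAt φ (dIci φ u) (Ici 0) u :=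
  ((hφ.differentiableOn hn) u hu).hasDerivWithinAt

theorem contDiffOn_dIci {φ : ℝ → ℝ} {n : WithTop ℕ∞} (hφ : ContDiffOn ℝ (n + 1) φ (Ici 0)) :
    ContDiffOn ℝ n (dIci φ) (Ici 0) :=
  hφ.derivWithin (uniqueDiffOn_Ici 0) le_rfl

-- With `f = exp ∘ g`, `h' = hDeriv g ∘ η` and `h'' = (hDerivDeriv g * expMulFint g) ∘ η`.
noncomputable def expMulFint (g : ℝ → ℝ) (u : ℝ) : ℝ := exp (g u) * Fint (exp ∘ g) u

noncomputable def hDeriv (g : ℝ → ℝ) (u : ℝ) : ℝ :=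
  (dIci g u - (dIci g u ^ 2 + dIci (dIci g) u) * expMulFint g u) * expMulFint g u

noncomputable def hDerivDeriv (g : ℝ → ℝ) (u : ℝ) : ℝ :=
  -dIci g u + 3 * (dIci g u ^ 2 + dIci (dIci g) u) * expMulFint g u -
    (dIci (dIci (dIci g)) u + 4 * dIci g u * dIci (dIci g) u + 2 * dIci g u ^ 3) *
      expMulFint g u ^ 2

namespace ConditionG

variable {g : ℝ → ℝ} {u : ℝ}

theorem hasDerivWithinAt (hg : ConditionG g) (hu : 0 ≤ u) :
    HasDerivWithinAt g (dIci g u) (Ici 0) u :=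
  hasDerivWithinAt_dIci_of_contDiffOn hg.1 (by norm_num) hu

theorem hasDerivWithinAt_dIci (hg : ConditionG g) (hu : 0 ≤ u) :
    HasDerivWithinAt (dIci g) (dIci (dIci g) u) (Ici 0) u :=
  hasDerivWithinAt_dIci_of_contDiffOn (n := 2) (contDiffOn_dIci hg.1) (by norm_num) hu

theorem hasDerivWithinAt_dIci_dIci (hg : ConditionG g) (hu : 0 ≤ u) :
    HasDerivWithinAt (dIci (dIci g)) (dIci (dIci (dIci g)) u) (Ici 0) u :=
  hasDerivWithinAt_dIci_of_contDiffOn (n := 1)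
    (contDiffOn_dIci (n := 1) (contDiffOn_dIci (n := 2) hg.1)) one_ne_zero hu

theorem dIci_pos (hg : ConditionG g) (hu : 0 ≤ u) : 0 < dIci g u := (hg.2 u hu).1

theorem dIci_dIci_pos (hg : ConditionG g) (hu : 0 ≤ u) : 0 < dIci (dIci g) u := (hg.2 u hu).2.1

theorem dIci_dIci_le_sq (hg : ConditionG g) (hu : 0 ≤ u) : dIci (dIci g) u ≤ dIci g u ^ 2 :=
  sub_nonneg.1 (hg.2 u hu).2.2.1

theorem dIci_mul_dIci_dIci_dIci_lt (hg : ConditionG g) (hu : 0 ≤ u) :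
    dIci g u * dIci (dIci (dIci g)) u < 2 * dIci (dIci g) u ^ 2 :=
  sub_pos.1 (hg.2 u hu).2.2.2

theorem dIci_zero_le (hg : ConditionG g) (hu : 0 ≤ u) : dIci g 0 ≤ dIci g u :=
  monotoneOn_Ici_of_hasDerivWithinAt_nonneg (fun _ hx => hg.hasDerivWithinAt_dIci hx)
    (fun _ hx => (hg.dIci_dIci_pos hx).le) self_mem_Ici hu hu

theorem add_dIci_zero_mul_le (hg : ConditionG g) (hu : 0 ≤ u) : g 0 + dIci g 0 * u ≤ g u := by
  have hmono : MonotoneOn (fun x => g x - dIci g 0 * x) (Ici 0) :=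
    monotoneOn_Ici_of_hasDerivWithinAt_nonneg
      (fun x hx => (hg.hasDerivWithinAt hx).sub ((hasDerivWithinAt_id x _).const_mul _))
      (fun x hx => by simpa using hg.dIci_zero_le hx)
  have := hmono self_mem_Ici hu hu
  simp only [mul_zero, sub_zero] at this
  linarith

theorem exp_neg_le (hg : ConditionG g) (hu : 0 ≤ u) :
    exp (-g u) ≤ exp (-g 0) * exp (-dIci g 0 * u) := by
  rw [← exp_add, exp_le_exp]
  nlinarith [hg.add_dIci_zero_mul_le hu]

theorem integrableOn_exp_neg (hg : ConditionG g) :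
    IntegrableOn (fun s => exp (-g s)) (Ioi 0) := by
  refine ((exp_neg_integrableOn_Ioi 0 (hg.dIci_pos le_rfl)).const_mul (exp (-g 0))).mono' ?_ ?_
  · exact ((continuous_exp.comp_continuousOn hg.1.continuousOn.neg).mono
      Ioi_subset_Ici_self).aestronglyMeasurable measurableSet_Ioi
  · refine (ae_restrict_iff' measurableSet_Ioi).2 (ae_of_all _ fun s hs => ?_)
    rw [norm_of_nonneg (exp_pos _).le]
    exact hg.exp_neg_le (le_of_lt hs)

theorem tendsto_exp_neg_mul (hg : ConditionG g) {φ : ℝ → ℝ} {C : ℝ}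
    (hφ : ∀ v, 0 ≤ v → 0 ≤ φ v ∧ φ v ≤ C) :
    Tendsto (fun v => exp (-g v) * φ v) atTop (𝓝 0) := by
  have hdecay : Tendsto (fun v => exp (-g 0) * exp (-dIci g 0 * v) * C) atTop (𝓝 0) := by
    simpa using ((tendsto_exp_neg_atTop_nhds_zero.comp
      (tendsto_id.const_mul_atTop (hg.dIci_pos le_rfl))).const_mul (exp (-g 0))).mul_const C
  refine squeeze_zero' ?_ ?_ hdecay <;> filter_upwards [eventually_ge_atTop 0] with v hv
  · exact mul_nonneg (exp_pos _).le (hφ v hv).1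
  · exact mul_le_mul (hg.exp_neg_le hv) (hφ v hv).2 (hφ v hv).1 (by positivity)

theorem continuousOn_exp_comp (hg : ConditionG g) : ContinuousOn (exp ∘ g) (Ici 0) :=
  continuous_exp.comp_continuousOn hg.1.continuousOn

theorem integrableOn_inv_exp_comp (hg : ConditionG g) :
    IntegrableOn (fun s => ((exp ∘ g) s)⁻¹) (Ioi 0) := by
  simpa only [Function.comp_apply, exp_neg] using hg.integrableOn_exp_neg

theorem hasDerivWithinAt_Fint (hg : ConditionG g) (hu : 0 ≤ u) :
    HasDerivWithinAt (Fint (exp ∘ g)) (-exp (-g u)) (Ici 0) u := by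
  simpa only [Function.comp_apply, exp_neg] using
    _root_.hasDerivWithinAt_Fint hg.continuousOn_exp_comp (fun _ _ => exp_pos _)
      hg.integrableOn_inv_exp_comp hu

theorem Fint_pos (hg : ConditionG g) (hu : 0 ≤ u) : 0 < Fint (exp ∘ g) u :=
  _root_.Fint_pos hg.continuousOn_exp_comp (fun _ _ => exp_pos _) hg.integrableOn_inv_exp_comp hu

theorem tendsto_Fint_atTop (hg : ConditionG g) : Tendsto (Fint (exp ∘ g)) atTop (𝓝 0) :=
  _root_.tendsto_Fint_atTop hg.integrableOn_inv_exp_comp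

theorem strictMonoOn_neg_log_Fint (hg : ConditionG g) :
    StrictMonoOn (fun u => -log (Fint (exp ∘ g) u)) (Ici 0) := fun _ hu _ hv huv =>
  neg_lt_neg <| log_lt_log (hg.Fint_pos hv) <|
    strictAntiOn_Fint hg.continuousOn_exp_comp (fun _ _ => exp_pos _)
      hg.integrableOn_inv_exp_comp hu hv huv

theorem expMulFint_pos (hg : ConditionG g) (hu : 0 ≤ u) : 0 < expMulFint g u :=
  mul_pos (exp_pos _) (hg.Fint_pos hu)

theorem hasDerivWithinAt_expMulFint (hg : ConditionG g) (hu : 0 ≤ u) :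
    HasDerivWithinAt (expMulFint g) (dIci g u * expMulFint g u - 1) (Ici 0) u := by
  refine ((hg.hasDerivWithinAt hu).exp.mul (hg.hasDerivWithinAt_Fint hu)).congr_deriv ?_
  rw [expMulFint, exp_neg]
  field_simp
  ring

theorem hasDerivWithinAt_neg_log_Fint (hg : ConditionG g) (hu : 0 ≤ u) :
    HasDerivWithinAt (fun v => -log (Fint (exp ∘ g) v)) (expMulFint g u)⁻¹ (Ici 0) u := by
  refine ((hg.hasDerivWithinAt_Fint hu).log (hg.Fint_pos hu).ne').neg.congr_deriv ?_
  rw [expMulFint, exp_neg, neg_div, neg_neg, div_eq_mul_inv, mul_inv]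

theorem dIci_mul_expMulFint_lt_one (hg : ConditionG g) (hu : 0 ≤ u) :
    dIci g u * expMulFint g u < 1 := by
  have hU : ∀ x ∈ Ici (0 : ℝ),
      HasDerivWithinAt (fun v => exp (-g v) * (dIci g v)⁻¹ - Fint (exp ∘ g) v)
        (-(exp (-g x) * dIci (dIci g) x / dIci g x ^ 2)) (Ici 0) x := fun x hx => by
    refine (((hg.hasDerivWithinAt hx).neg.exp.mul ((hg.hasDerivWithinAt_dIci hx).inv
      (hg.dIci_pos hx).ne')).sub (hg.hasDerivWithinAt_Fint hx)).congr_deriv ?_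
    have := (hg.dIci_pos hx).ne'
    simp only [Pi.neg_apply, Pi.inv_apply]
    field_simp
    ring
  have hUpos := pos_of_hasDerivWithinAt_neg_of_tendsto_zero hU
    (fun x hx => neg_neg_of_pos (div_pos (mul_pos (exp_pos _) (hg.dIci_dIci_pos hx))
      (pow_pos (hg.dIci_pos hx) 2)))
    (by simpa using (hg.tendsto_exp_neg_mul fun v hv => ⟨(inv_pos.2 (hg.dIci_pos hv)).le,
      inv_anti₀ (hg.dIci_pos le_rfl) (hg.dIci_zero_le hv)⟩).sub hg.tendsto_Fint_atTop)
    (mem_Ici.2 hu)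
  rw [sub_pos, ← div_eq_mul_inv, lt_div_iff₀ (hg.dIci_pos hu)] at hUpos
  calc dIci g u * expMulFint g u = exp (g u) * (Fint (exp ∘ g) u * dIci g u) := by
        rw [expMulFint]; ring
    _ < exp (g u) * exp (-g u) := mul_lt_mul_of_pos_left hUpos (exp_pos _)
    _ = 1 := by rw [← exp_add, add_neg_cancel, exp_zero]

theorem dIci_lt_mul_expMulFint (hg : ConditionG g) (hu : 0 ≤ u) :
    dIci g u < (dIci g u ^ 2 + dIci (dIci g) u) * expMulFint g u := by
  have hc : ∀ x ∈ Ici (0 : ℝ), 0 < dIci g x ^ 2 + dIci (dIci g) x := fun x hx =>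
    add_pos (pow_pos (hg.dIci_pos hx) 2) (hg.dIci_dIci_pos hx)
  have hW : ∀ x ∈ Ici (0 : ℝ), HasDerivWithinAt
      (fun v => Fint (exp ∘ g) v - exp (-g v) * (dIci g v / (dIci g v ^ 2 + dIci (dIci g) v)))
      (-(exp (-g x) * (2 * dIci (dIci g) x ^ 2 - dIci g x * dIci (dIci (dIci g)) x) /
        (dIci g x ^ 2 + dIci (dIci g) x) ^ 2)) (Ici 0) x := fun x hx => by
    refine ((hg.hasDerivWithinAt_Fint hx).sub ((hg.hasDerivWithinAt hx).neg.exp.mul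
      ((hg.hasDerivWithinAt_dIci hx).div (((hg.hasDerivWithinAt_dIci hx).pow 2).add
        (hg.hasDerivWithinAt_dIci_dIci hx)) (hc x hx).ne'))).congr_deriv ?_
    have := (hc x hx).ne'
    simp only [Pi.neg_apply, Pi.div_apply, Pi.add_apply, Pi.pow_apply]
    field_simp
    ring
  have hratio : ∀ v, 0 ≤ v → dIci g v / (dIci g v ^ 2 + dIci (dIci g) v) ≤ (dIci g 0)⁻¹ :=
    fun v hv => calc
      dIci g v / (dIci g v ^ 2 + dIci (dIci g) v) ≤ dIci g v / dIci g v ^ 2 :=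
        div_le_div_of_nonneg_left (hg.dIci_pos hv).le (pow_pos (hg.dIci_pos hv) 2)
          (le_add_of_nonneg_right (hg.dIci_dIci_pos hv).le)
      _ = (dIci g v)⁻¹ := by rw [sq, div_mul_cancel_left₀ (hg.dIci_pos hv).ne']
      _ ≤ (dIci g 0)⁻¹ := inv_anti₀ (hg.dIci_pos le_rfl) (hg.dIci_zero_le hv)
  have hWpos := pos_of_hasDerivWithinAt_neg_of_tendsto_zero hW
    (fun x hx => neg_neg_of_pos (div_pos (mul_pos (exp_pos _)
      (sub_pos.2 (hg.dIci_mul_dIci_dIci_dIci_lt hx))) (pow_pos (hc x hx) 2)))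
    (by simpa using hg.tendsto_Fint_atTop.sub (hg.tendsto_exp_neg_mul fun v hv =>
      ⟨(div_pos (hg.dIci_pos hv) (hc v hv)).le, hratio v hv⟩))
    (mem_Ici.2 hu)
  rw [sub_pos, ← mul_div_assoc, div_lt_iff₀ (hc u (mem_Ici.2 hu))] at hWpos
  calc dIci g u = exp (g u) * (exp (-g u) * dIci g u) := by
        rw [← mul_assoc, ← exp_add, add_neg_cancel, exp_zero, one_mul]
    _ < exp (g u) * (Fint (exp ∘ g) u * (dIci g u ^ 2 + dIci (dIci g) u)) :=
        mul_lt_mul_of_pos_left hWpos (exp_pos _)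
    _ = (dIci g u ^ 2 + dIci (dIci g) u) * expMulFint g u := by rw [expMulFint]; ring

theorem hDeriv_neg (hg : ConditionG g) (hu : 0 ≤ u) : hDeriv g u < 0 :=
  mul_neg_of_neg_of_pos (sub_neg.2 (hg.dIci_lt_mul_expMulFint hu)) (hg.expMulFint_pos hu)

theorem four_mul_hDeriv_le (hg : ConditionG g) (hu : 0 ≤ u) :
    4 * hDeriv g u ≤ hDerivDeriv g u * expMulFint g u :=
  four_mul_le_of_bounds (hg.dIci_pos hu) (hg.expMulFint_pos hu) (hg.dIci_dIci_le_sq hu)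
    (hg.dIci_mul_dIci_dIci_dIci_lt hu) (hg.dIci_mul_expMulFint_lt_one hu)
    (hg.dIci_lt_mul_expMulFint hu)

theorem hasDerivWithinAt_hDeriv (hg : ConditionG g) (hu : 0 ≤ u) :
    HasDerivWithinAt (hDeriv g) (hDerivDeriv g u) (Ici 0) u := by
  have hZ := hg.hasDerivWithinAt_expMulFint hu
  refine (((hg.hasDerivWithinAt_dIci hu).sub ((((hg.hasDerivWithinAt_dIci hu).pow 2).add
    (hg.hasDerivWithinAt_dIci_dIci hu)).mul hZ)).mul hZ).congr_deriv ?_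
  simp only [hDerivDeriv, Pi.sub_apply, Pi.mul_apply, Pi.add_apply, Pi.pow_apply]
  ring

theorem dIci_exp_comp (hg : ConditionG g) (hu : 0 ≤ u) :
    dIci (exp ∘ g) u = exp (g u) * dIci g u :=
  (hg.hasDerivWithinAt hu).exp.derivWithin (uniqueDiffOn_Ici 0 u hu)

theorem hasDerivWithinAt_one_sub_dIci_mul_Fint (hg : ConditionG g) (hu : 0 ≤ u) :
    HasDerivWithinAt (fun v => 1 - dIci (exp ∘ g) v * Fint (exp ∘ g) v)
      (dIci g u - (dIci g u ^ 2 + dIci (dIci g) u) * expMulFint g u) (Ici 0) u := by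
  have hH := (((hg.hasDerivWithinAt hu).exp.mul (hg.hasDerivWithinAt_dIci hu)).mul
    (hg.hasDerivWithinAt_Fint hu)).const_sub 1
  refine (hH.congr (fun v hv => by rw [hg.dIci_exp_comp hv]; rfl)
    (by rw [hg.dIci_exp_comp hu]; rfl)).congr_deriv ?_
  rw [expMulFint, exp_neg, Pi.mul_apply]
  field_simp
  ring

theorem hasDerivWithinAt_of_Fint_eq_exp_neg {η : ℝ → ℝ} (hg : ConditionG g)
    (hη : ∀ y, -log (Fint (exp ∘ g) 0) ≤ y → 0 ≤ η y ∧ Fint (exp ∘ g) (η y) = exp (-y))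
    {y : ℝ} (hy : -log (Fint (exp ∘ g) 0) ≤ y) :
    HasDerivWithinAt η (expMulFint g (η y)) (Ici (-log (Fint (exp ∘ g) 0))) y := by
  set Y := fun u => -log (Fint (exp ∘ g) u)
  have hYmono : StrictMonoOn Y (Ici 0) := hg.strictMonoOn_neg_log_Fint
  have hmaps : MapsTo η (Ici (Y 0)) (Ici 0) := fun z hz => (hη z hz).1
  have hinv : LeftInvOn Y η (Ici (Y 0)) := fun z hz => by simp [Y, (hη z hz).2]
  have hηY : ∀ u ∈ Ici (0 : ℝ), η (Y u) = u := fun u hu =>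
    hYmono.injOn (hmaps (hYmono.monotoneOn self_mem_Ici hu hu)) hu
      (hinv (hYmono.monotoneOn self_mem_Ici hu hu))
  have hsurj : SurjOn η (Ici (Y 0)) (Ici (η (Y 0))) := by
    rw [hηY 0 self_mem_Ici]
    exact fun u hu => ⟨Y u, hYmono.monotoneOn self_mem_Ici hu hu, hηY u hu⟩
  have hcont := (strictMonoOn_of_leftInvOn hYmono.monotoneOn hmaps hinv
    ).continuousWithinAt_Ici_of_surjOn hsurj hy
  simpa using (hg.hasDerivWithinAt_neg_log_Fint (hmaps hy)).of_leftInvOn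
    (inv_ne_zero (hg.expMulFint_pos (hmaps hy)).ne') hcont hmaps hinv hy

end ConditionG

/-- If `g` satisfies condition (g), `f = e^g`, `η(y)` is the (unique) `u ≥ 0`
with `F(u) = e^{-y}` and `h(y) = 1 - f'(η(y)) F(η(y))`, then `h` is twice
differentiable on `[-log F(0), ∞)`, with `h' < 0` and `h'' ≥ 4 h'` there. -/
theorem h_twice_differentiable_deriv_neg_ratio_le_four
    (g : ℝ → ℝ) (hg : ConditionG g)
    (f : ℝ → ℝ) (hf : ∀ u : ℝ, f u = Real.exp (g u))
    (η : ℝ → ℝ)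
    (hη : ∀ y : ℝ, -Real.log (Fint f 0) ≤ y →
      0 ≤ η y ∧ Fint f (η y) = Real.exp (-y))
    (h : ℝ → ℝ)
    (hh : ∀ y : ℝ, h y = 1 - dIci f (η y) * Fint f (η y)) :
    ∀ y : ℝ, -Real.log (Fint f 0) ≤ y →
      DifferentiableWithinAt ℝ h (Set.Ici (-Real.log (Fint f 0))) y ∧
      DifferentiableWithinAt ℝ (derivWithin h (Set.Ici (-Real.log (Fint f 0))))
        (Set.Ici (-Real.log (Fint f 0))) y ∧
      derivWithin h (Set.Ici (-Real.log (Fint f 0))) y < 0 ∧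
      4 * derivWithin h (Set.Ici (-Real.log (Fint f 0))) y ≤
        derivWithin (derivWithin h (Set.Ici (-Real.log (Fint f 0))))
          (Set.Ici (-Real.log (Fint f 0))) y := by
  intro y hy
  obtain rfl : f = exp ∘ g := funext hf
  set a := -log (Fint (exp ∘ g) 0)
  have hmaps : MapsTo η (Ici a) (Ici 0) := fun z hz => (hη z hz).1
  have hη' : ∀ z ∈ Ici a, HasDerivWithinAt η (expMulFint g (η z)) (Ici a) z :=
    fun z hz => hg.hasDerivWithinAt_of_Fint_eq_exp_neg hη hz
  have hh' : ∀ z ∈ Ici a, HasDerivWithinAt h (hDeriv g (η z)) (Ici a) z := fun z hz =>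
    ((hg.hasDerivWithinAt_one_sub_dIci_mul_Fint (hmaps hz)).comp z (hη' z hz) hmaps).congr
      (fun w _ => hh w) (hh z)
  have hderiv : EqOn (derivWithin h (Ici a)) (hDeriv g ∘ η) (Ici a) := fun z hz =>
    (hh' z hz).derivWithin (uniqueDiffOn_Ici a z hz)
  have hh'' : HasDerivWithinAt (derivWithin h (Ici a))
      (hDerivDeriv g (η y) * expMulFint g (η y)) (Ici a) y :=
    ((hg.hasDerivWithinAt_hDeriv (hmaps hy)).comp y (hη' y hy) hmaps).congr hderiv (hderiv hy)
  refine ⟨(hh' y hy).differentiableWithinAt, hh''.differentiableWithinAt, ?_, ?_⟩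
  · rw [hderiv hy]
    exact hg.hDeriv_neg (hmaps hy)
  · rw [hderiv hy, hh''.derivWithin (uniqueDiffOn_Ici a y hy)]
    exact hg.four_mul_hDeriv_le (hmaps hy)
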